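/- Let T be a bounded linear operator on a complex Hilbert space H. Then ω(T) = ‖T‖/2 if and only if for every θ ∈ ℝ one has ‖ℑ(e^{iθ}T)‖ = ‖ℜ(e^{iθ}T)‖ = ‖T‖/2. -/

import Mathlib

open ContinuousLinearMap

/-- The numerical radius of a bounded operator on a complex inner product space:
`ω(T) = sup { |⟨Tx, x⟩| : ‖x‖ = 1 }`. -/
noncomputable def numRadius {E : Type*} [NormedAddCommGroup E] [InnerProductSpace ℂ E]
    (T : E →L[ℂ] E) : ℝ :=
  ⨆ x : { x : E // ‖x‖ = 1 }, ‖(inner ℂ (T x) (x : E) : ℂ)‖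

/-!
For a self-adjoint operator `A`, Mathlib's Rayleigh-quotient formula gives
`‖A‖ = sup_x |Re ⟨A x, x⟩| / ‖x‖²`. Since `Re ⟨ℜ S x, x⟩ = Re ⟨S x, x⟩`, this yields
`ω(T) = sup_θ ‖ℜ (e^{iθ} T)‖`, and `ℑ S = -ℜ (i S)` gives `‖ℑ S‖ ≤ ω(S)` as well.

If `ω(T) = ‖T‖/2`, then for `S = e^{iθ} T` both `‖ℜ S‖` and `‖ℑ S‖` are at most `‖T‖/2`, while
`S = ℜ S + i ℑ S` forces `‖T‖ ≤ ‖ℜ S‖ + ‖ℑ S‖`; so both equal `‖T‖/2`. Conversely, if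
`‖ℜ (e^{iθ} T)‖ = ‖T‖/2` for all `θ`, the formula for `ω(T)` gives `ω(T) = ‖T‖/2`.
-/

open Complex ComplexStarModule

theorem Complex.starRingEnd_exp_arg_mul_I_mul_self (z : ℂ) :
    starRingEnd ℂ (exp (z.arg * I)) * z = ‖z‖ := by
  nth_rw 2 [← norm_mul_exp_arg_mul_I z]
  rw [mul_left_comm, conj_mul', norm_exp_ofReal_mul_I, ofReal_one, one_pow, mul_one]

section NumericalRadius

variable {E : Type*} [NormedAddCommGroup E] [InnerProductSpace ℂ E]

theorem numRadius_nonneg (T : E →L[ℂ] E) : 0 ≤ numRadius T :=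
  Real.iSup_nonneg fun _ ↦ norm_nonneg _

theorem norm_inner_apply_self_le_norm (T : E →L[ℂ] E) {x : E} (hx : ‖x‖ = 1) :
    ‖inner ℂ (T x) x‖ ≤ ‖T‖ := by
  simpa [hx] using (norm_inner_le_norm (T x) x).trans
    (mul_le_mul_of_nonneg_right (T.le_opNorm x) (norm_nonneg x))

theorem norm_inner_apply_self_le_numRadius (T : E →L[ℂ] E) {x : E} (hx : ‖x‖ = 1) :
    ‖inner ℂ (T x) x‖ ≤ numRadius T :=
  le_ciSup (f := fun x : { x : E // ‖x‖ = 1 } ↦ ‖inner ℂ (T x) (x : E)‖)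
    ⟨‖T‖, by rintro _ ⟨y, rfl⟩; exact norm_inner_apply_self_le_norm T y.2⟩ ⟨x, hx⟩

theorem numRadius_smul (c : ℂ) (T : E →L[ℂ] E) : numRadius (c • T) = ‖c‖ * numRadius T := by
  simp only [numRadius, smul_apply, inner_smul_left, norm_mul, RCLike.norm_conj]
  exact (Real.mul_iSup_of_nonneg (norm_nonneg c) _).symm

theorem abs_rayleighQuotient_le_numRadius (T : E →L[ℂ] E) (x : E) :
    |T.rayleighQuotient x| ≤ numRadius T := by
  rcases eq_or_ne x 0 with rfl | hx
  · simpa using numRadius_nonneg T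
  have hx' : ‖x‖ ≠ 0 := norm_ne_zero_iff.mpr hx
  have hu : ‖(‖x‖⁻¹ : ℂ) • x‖ = 1 := by simp [norm_smul, hx']
  rw [← T.rayleigh_smul x (c := (‖x‖⁻¹ : ℂ)) (by simpa using hx'), rayleighQuotient, hu,
    one_pow, div_one, reApplyInnerSelf_apply]
  exact (abs_re_le_norm _).trans (norm_inner_apply_self_le_numRadius T hu)

end NumericalRadius

section RealPart

variable {H : Type*} [NormedAddCommGroup H] [InnerProductSpace ℂ H] [CompleteSpace H]

theorem coe_realPart_eq (S : H →L[ℂ] H) : (ℜ S : H →L[ℂ] H) = (2 : ℂ)⁻¹ • (S + adjoint S) := by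
  rw [realPart_apply_coe, star_eq_adjoint, ← Complex.coe_smul]
  norm_num

theorem coe_imaginaryPart_eq (S : H →L[ℂ] H) :
    (ℑ S : H →L[ℂ] H) = (2 * I)⁻¹ • (S - adjoint S) := by
  rw [imaginaryPart_apply_coe, star_eq_adjoint, ← Complex.coe_smul, smul_smul]
  congr 1
  field_simp
  simp

theorem rayleighQuotient_realPart (S : H →L[ℂ] H) (x : H) :
    (ℜ S : H →L[ℂ] H).rayleighQuotient x = S.rayleighQuotient x := by
  have hadj : inner ℂ (adjoint S x) x = starRingEnd ℂ (inner ℂ (S x) x) := by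
    rw [adjoint_inner_left, inner_conj_symm]
  simp only [rayleighQuotient, reApplyInnerSelf_apply, coe_realPart_eq, FunLike.coe_smul,
    Pi.smul_apply, add_apply, inner_smul_left, inner_add_left, hadj, add_conj]
  simp

theorem norm_realPart_le_numRadius (S : H →L[ℂ] H) : ‖(ℜ S : H →L[ℂ] H)‖ ≤ numRadius S := by
  rw [norm_eq_iSup_rayleighQuotient _ (ℜ S).2.isSymmetric]
  exact ciSup_le fun x ↦ rayleighQuotient_realPart S x ▸ abs_rayleighQuotient_le_numRadius S x

theorem norm_imaginaryPart_le_numRadius (S : H →L[ℂ] H) :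
    ‖(ℑ S : H →L[ℂ] H)‖ ≤ numRadius S := by
  have := norm_realPart_le_numRadius (I • S)
  rwa [realPart_I_smul, numRadius_smul, norm_I, one_mul, NegMemClass.coe_neg, norm_neg] at this

theorem norm_le_norm_realPart_add_norm_imaginaryPart (S : H →L[ℂ] H) :
    ‖S‖ ≤ ‖(ℜ S : H →L[ℂ] H)‖ + ‖(ℑ S : H →L[ℂ] H)‖ := by
  conv_lhs => rw [← realPart_add_I_smul_imaginaryPart S]
  exact (norm_add_le _ _).trans_eq (by rw [norm_smul, norm_I, one_mul])

theorem numRadius_le_of_forall_norm_realPart_le (T : H →L[ℂ] H) {c : ℝ}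
    (h : ∀ θ : ℝ, ‖(ℜ (exp (θ * I) • T) : H →L[ℂ] H)‖ ≤ c) : numRadius T ≤ c := by
  refine Real.iSup_le (fun ⟨x, hx⟩ ↦ ?_) ((norm_nonneg _).trans (h 0))
  set z := inner ℂ (T x) x
  set R : H →L[ℂ] H := ↑(ℜ (exp (z.arg * I) • T))
  have hrot : (exp (z.arg * I) • T).rayleighQuotient x = ‖z‖ := by
    rw [rayleighQuotient, reApplyInnerSelf_apply, hx, smul_apply, inner_smul_left,
      starRingEnd_exp_arg_mul_I_mul_self]
    simp
  calc ‖z‖ = R.rayleighQuotient x := hrot.symm.trans (rayleighQuotient_realPart _ x).symm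
    _ ≤ |R.rayleighQuotient x| := le_abs_self _
    _ ≤ ‖R‖ := R.rayleighQuotient_le_norm x
    _ ≤ c := h _

end RealPart

/-- `ω(T) = ‖T‖/2` iff `‖ℑ(e^{iθ}T)‖ = ‖ℜ(e^{iθ}T)‖ = ‖T‖/2` for every `θ ∈ ℝ`. -/
theorem stmt_10 {H : Type*} [NormedAddCommGroup H] [InnerProductSpace ℂ H] [CompleteSpace H]
    (T : H →L[ℂ] H) :
    numRadius T = ‖T‖ / 2 ↔
      ∀ θ : ℝ,
        ‖(2 * Complex.I)⁻¹ •
            (Complex.exp (θ * Complex.I) • T - adjoint (Complex.exp (θ * Complex.I) • T))‖ =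
          ‖T‖ / 2 ∧
        ‖(2 : ℂ)⁻¹ •
            (Complex.exp (θ * Complex.I) • T + adjoint (Complex.exp (θ * Complex.I) • T))‖ =
          ‖T‖ / 2 := by
  simp only [← coe_realPart_eq, ← coe_imaginaryPart_eq]
  constructor
  · intro hω θ
    set S := exp (θ * I) • T
    have hS : ‖S‖ = ‖T‖ := by rw [norm_smul, norm_exp_ofReal_mul_I, one_mul]
    have hωS : numRadius S = ‖T‖ / 2 := by rw [numRadius_smul, norm_exp_ofReal_mul_I, one_mul, hω]
    have hre := norm_realPart_le_numRadius S
    have him := norm_imaginaryPart_le_numRadius S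
    have hsum := norm_le_norm_realPart_add_norm_imaginaryPart S
    constructor <;> linarith
  · intro h
    refine le_antisymm (numRadius_le_of_forall_norm_realPart_le T fun θ ↦ (h θ).2.le) ?_
    have h0 := (h 0).2
    rw [ofReal_zero, zero_mul, exp_zero, one_smul] at h0
    exact h0 ▸ norm_realPart_le_numRadius T
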